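/- Let G = (V,E) be the line graph of a bipartite graph. Then xc(STAB(G)) ≤ 2|V|, and xc(STAB(Ḡ)) ≤ 3|V| for the complement Ḡ of G. -/

import Mathlib

/-!
Write `G` as the line graph of a bipartite graph `H` with sides `L` and `R`, the vertex `v` of `G`
being the edge `(a v, b v)` of `H`. The centers of `H` are its vertices of degree at least two
together with one endpoint of each isolated edge: by double counting there are at most `|V|` of
them, and every star of `H` lies in the star of a center.

Stable sets of `G` are matchings of `H`. As `H` is bipartite, its matching polytope is
`{x ≥ 0 | x(δ(w)) ≤ 1 for all w}` (Birkhoff–von Neumann, applied to a doubly stochastic completion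
of the weight matrix), and the star inequalities of the centers imply the others: at most `2|V|`
facets.

Stable sets of `Ḡ` are cliques of `G`, which, `H` being triangle-free, are sets of edges inside a
star, hence inside the star of a center. So `STAB(Ḡ)` is the convex hull of the cube faces
`[0,1]^{δ(c)}` over the centers `c`, the projection of `{(x, λ) | λ ∈ Δ, 0 ≤ x_v ≤ ∑_{c ∋ v} λ_c}`,
which has at most `2|V| + #centers ≤ 3|V|` facets.

Facets are counted through the fact that every facet of `{x | A x ≤ b}` is the face where some row
that is not an implicit equality is tight.
-/

/-- A polytope is the convex hull of a finite set of points. -/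
def IsPolytope {E : Type*} [AddCommGroup E] [Module ℝ E] (P : Set E) : Prop :=
  ∃ F : Set E, F.Finite ∧ P = convexHull ℝ F

/-- An (exposed) face of a set `Q ⊆ ℝ^κ`. -/
def IsExposedFace {κ : Type*} [Fintype κ] (Q F : Set (κ → ℝ)) : Prop :=
  F ⊆ Q ∧ ∃ (c : κ → ℝ) (α : ℝ), (∀ y ∈ Q, ∑ i, c i * y i ≤ α) ∧
    F = {y ∈ Q | ∑ i, c i * y i = α}

/-- A facet of `Q`: a maximal proper nonempty face of `Q`. -/
def IsFacet {κ : Type*} [Fintype κ] (Q F : Set (κ → ℝ)) : Prop :=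
  IsExposedFace Q F ∧ F.Nonempty ∧ F ≠ Q ∧
    ∀ F' : Set (κ → ℝ), IsExposedFace Q F' → F'.Nonempty → F' ≠ Q → F ⊆ F' → F' = F

/-- The size of a polytope: its number of facets. -/
noncomputable def polySize {κ : Type*} [Fintype κ] (Q : Set (κ → ℝ)) : ℕ :=
  {F : Set (κ → ℝ) | IsFacet Q F}.ncard

/-- `Q` is an extension of `P` if `Q` is a polytope and some linear map sends `Q` onto `P`. -/
def IsExtension {ι κ : Type*} [Fintype ι] [Fintype κ]
    (P : Set (ι → ℝ)) (Q : Set (κ → ℝ)) : Prop :=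
  IsPolytope Q ∧ ∃ π : (κ → ℝ) →ₗ[ℝ] (ι → ℝ), π '' Q = P

/-- The extension complexity of `P`: the minimum number of facets of an extension of `P`. -/
noncomputable def xc {ι : Type*} [Fintype ι] (P : Set (ι → ℝ)) : ℕ :=
  sInf {r : ℕ | ∃ (k : ℕ) (Q : Set (Fin k → ℝ)), IsExtension P Q ∧ polySize Q = r}


/-- The stable set polytope of a graph: the convex hull of the characteristic vectors of
its independent (stable) sets. -/
def stab {V : Type*} [Fintype V] (G : SimpleGraph V) : Set (V → ℝ) :=
  convexHull ℝ {x : V → ℝ |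
    ∃ S : Set V, (∀ u ∈ S, ∀ v ∈ S, ¬ G.Adj u v) ∧ x = S.indicator 1}

/-- A graph is bipartite if the vertices split into two parts so that every edge goes
between the parts. -/
def IsBipartite {V : Type*} (G : SimpleGraph V) : Prop :=
  ∃ s : Set V, ∀ ⦃u v⦄, G.Adj u v → (u ∈ s ↔ v ∉ s)

/-- The line graph of a graph `H`: vertices are the edges of `H`, two being adjacent when
they share an endpoint. -/
def lineGraph {W : Type*} (H : SimpleGraph W) : SimpleGraph H.edgeSet :=
  SimpleGraph.fromRel fun e f => ∃ v : W, v ∈ (e : Sym2 W) ∧ v ∈ (f : Sym2 W)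


open Finset Matrix Filter Topology

section Polyhedron

variable {ι κ : Type*} [Fintype κ]

def polyhedron (A : ι → κ → ℝ) (b : ι → ℝ) : Set (κ → ℝ) := {x | ∀ i, A i ⬝ᵥ x ≤ b i}

def tightFace (A : ι → κ → ℝ) (b : ι → ℝ) (i : ι) : Set (κ → ℝ) :=
  {x ∈ polyhedron A b | A i ⬝ᵥ x = b i}

lemma isLinearMap_dotProduct (c : κ → ℝ) : IsLinearMap ℝ (c ⬝ᵥ · : (κ → ℝ) → ℝ) :=
  ⟨dotProduct_add c, fun t x => dotProduct_smul t c x⟩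

variable {A : ι → κ → ℝ} {b : ι → ℝ}

lemma convex_polyhedron : Convex ℝ (polyhedron A b) := by
  simp only [polyhedron, Set.ofPred_forall]
  exact convex_iInter fun i => convex_halfSpace_le (isLinearMap_dotProduct (A i)) (b i)

lemma isExposedFace_tightFace (i : ι) : IsExposedFace (polyhedron A b) (tightFace A b i) :=
  ⟨fun _ hx => hx.1, A i, b i, fun _ hy => hy i, rfl⟩

lemma Convex.exists_forall_dotProduct_lt {C : Set (κ → ℝ)} (hC : Convex ℝ C) (hne : C.Nonempty)
    (hle : ∀ i, ∀ x ∈ C, A i ⬝ᵥ x ≤ b i) (s : Finset ι)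
    (hlt : ∀ i ∈ s, ∃ x ∈ C, A i ⬝ᵥ x < b i) : ∃ x ∈ C, ∀ i ∈ s, A i ⬝ᵥ x < b i := by
  classical
  induction s using Finset.induction_on with
  | empty =>
    obtain ⟨x, hx⟩ := hne
    exact ⟨x, hx, by simp⟩
  | insert j s _ ih =>
    obtain ⟨x, hxC, hx⟩ := ih fun i hi => hlt i (mem_insert_of_mem hi)
    obtain ⟨y, hyC, hy⟩ := hlt j (mem_insert_self j s)
    refine ⟨(1 / 2 : ℝ) • x + (1 / 2 : ℝ) • y, hC hxC hyC (by norm_num) (by norm_num) (by norm_num),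
      ?_⟩
    simp only [mem_insert, forall_eq_or_imp, dotProduct_add, dotProduct_smul, smul_eq_mul]
    exact ⟨by linarith [hle j x hxC], fun i hi => by linarith [hx i hi, hle i y hyC]⟩

lemma exists_pos_add_smul_sub_mem_polyhedron [Finite ι] {x z : κ → ℝ}
    (hx : x ∈ polyhedron A b) (htight : ∀ i, A i ⬝ᵥ x = b i → A i ⬝ᵥ z = b i) :
    ∃ ε : ℝ, 0 < ε ∧ x + ε • (x - z) ∈ polyhedron A b := by
  have hrow : ∀ i, ∀ᶠ ε in 𝓝[>] (0 : ℝ), A i ⬝ᵥ (x + ε • (x - z)) ≤ b i := by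
    intro i
    simp only [dotProduct_add, dotProduct_smul, dotProduct_sub, smul_eq_mul]
    rcases (hx i).lt_or_eq with hlt | heq
    · have hlim : Tendsto (fun ε : ℝ => A i ⬝ᵥ x + ε * (A i ⬝ᵥ x - A i ⬝ᵥ z)) (𝓝[>] 0)
          (𝓝 (A i ⬝ᵥ x)) := by
        refine Tendsto.mono_left ?_ nhdsWithin_le_nhds
        simpa using (continuous_const.add (continuous_id.mul continuous_const)).tendsto
          (f := fun ε : ℝ => A i ⬝ᵥ x + ε * (A i ⬝ᵥ x - A i ⬝ᵥ z)) 0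
      exact (hlim.eventually (gt_mem_nhds hlt)).mono fun _ h => h.le
    · exact Eventually.of_forall fun ε => by simp [heq, htight i heq]
  obtain ⟨ε, hε, hpos⟩ := ((eventually_all.2 hrow).and self_mem_nhdsWithin).exists
  exact ⟨ε, hpos, hε⟩

lemma IsFacet.exists_eq_tightFace [Finite ι] {F : Set (κ → ℝ)}
    (hF : IsFacet (polyhedron A b) F) :
    ∃ i, tightFace A b i ≠ polyhedron A b ∧ F = tightFace A b i := by
  classical
  have := Fintype.ofFinite ι
  obtain ⟨⟨hFP, c, α, hc, rfl⟩, hne, hFne, hmax⟩ := hF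
  -- Otherwise some point of `F` is strict in every row that is not an implicit equality; moving
  -- it away from a point of `P \ F` stays in `P` but leaves the halfspace supporting `F`.
  by_contra! h
  have hslack : ∀ i ∈ univ.filter (tightFace A b · ≠ polyhedron A b),
      ∃ x ∈ {y ∈ polyhedron A b | c ⬝ᵥ y = α}, A i ⬝ᵥ x < b i := by
    intro i hi
    rw [mem_filter] at hi
    by_contra! hle
    have hsub : {y ∈ polyhedron A b | c ⬝ᵥ y = α} ⊆ tightFace A b i :=
      fun y hy => ⟨hy.1, le_antisymm (hy.1 i) (hle y hy)⟩
    exact h i hi.2 (hmax _ (isExposedFace_tightFace i) (hne.mono hsub) hi.2 hsub).symm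
  obtain ⟨x, hxF, hx⟩ := Convex.exists_forall_dotProduct_lt
    (convex_polyhedron.inter (convex_hyperplane (isLinearMap_dotProduct c) α)) hne
    (fun i y hy => hy.1 i) _ hslack
  obtain ⟨z, hzP, hzF⟩ := Set.exists_of_ssubset (hFP.ssubset_of_ne hFne)
  have hcz : c ⬝ᵥ z < α := (hc z hzP).lt_of_ne fun h => hzF ⟨hzP, h⟩
  have htight : ∀ i, A i ⬝ᵥ x = b i → A i ⬝ᵥ z = b i := by
    intro i hi
    by_cases hP : tightFace A b i = polyhedron A b
    · exact (hP ▸ hzP : z ∈ tightFace A b i).2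
    · exact absurd hi (hx i (by simpa using hP)).ne
  obtain ⟨ε, hε, hy⟩ := exists_pos_add_smul_sub_mem_polyhedron hxF.1 htight
  have hout := hc _ hy
  change c ⬝ᵥ (x + ε • (x - z)) ≤ α at hout
  simp only [dotProduct_add, dotProduct_smul, dotProduct_sub, smul_eq_mul] at hout
  have hxα : c ⬝ᵥ x = α := hxF.2
  nlinarith

lemma polySize_polyhedron_le [Finite ι] (s : Finset ι)
    (hs : ∀ i ∉ s, ∀ x ∈ polyhedron A b, A i ⬝ᵥ x = b i) :
    polySize (polyhedron A b) ≤ s.card := by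
  have hsub : {F | IsFacet (polyhedron A b) F} ⊆ tightFace A b '' s := by
    intro F hF
    obtain ⟨i, hi, rfl⟩ := IsFacet.exists_eq_tightFace hF
    refine ⟨i, ?_, rfl⟩
    by_contra his
    exact hi (Set.Subset.antisymm (fun x hx => hx.1) fun x hx => ⟨hx, hs i his x hx⟩)
  calc polySize (polyhedron A b) ≤ (tightFace A b '' s).ncard :=
        Set.ncard_le_ncard hsub (s.finite_toSet.image _)
    _ ≤ s.card := (Set.ncard_image_le s.finite_toSet).trans (Set.ncard_coe_finset s).le

lemma xc_le_polySize {ι' : Type*} [Fintype ι'] {P : Set (ι' → ℝ)} {k : ℕ} {Q : Set (Fin k → ℝ)}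
    (h : IsExtension P Q) : xc P ≤ polySize Q :=
  Nat.sInf_le ⟨k, Q, h, rfl⟩

theorem xc_le_card_of_polyhedron [Finite ι] {ι' : Type*} [Fintype ι'] {P : Set (ι' → ℝ)}
    (s : Finset ι) (hs : ∀ i ∉ s, ∀ x ∈ polyhedron A b, A i ⬝ᵥ x = b i)
    (hQ : IsPolytope (polyhedron A b)) (π : (κ → ℝ) →ₗ[ℝ] ι' → ℝ)
    (hπ : π '' polyhedron A b = P) : xc P ≤ s.card := by
  let e := Fintype.equivFin κ
  let r : (Fin (Fintype.card κ) → ℝ) ≃ₗ[ℝ] κ → ℝ := LinearEquiv.funCongrLeft ℝ ℝ e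
  have hr : polyhedron (fun i => A i ∘ e.symm) b = r ⁻¹' polyhedron A b := by
    ext y
    simp only [polyhedron, Set.mem_ofPred_eq, Set.mem_preimage, comp_equiv_symm_dotProduct]
    rfl
  refine (xc_le_polySize ⟨?_, π ∘ₗ r.toLinearMap, ?_⟩).trans (polySize_polyhedron_le
    (A := fun i => A i ∘ e.symm) (b := b) s ?_)
  · obtain ⟨F, hF, hQF⟩ := hQ
    refine ⟨r.symm '' F, hF.image _, ?_⟩
    rw [hr, ← LinearEquiv.image_symm_eq_preimage, hQF]
    exact r.symm.toLinearMap.image_convexHull F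
  · rw [hr, LinearMap.coe_comp, Set.image_comp, LinearEquiv.coe_coe,
      Set.image_preimage_eq _ r.surjective, hπ]
  · intro i hi y hy
    rw [hr] at hy
    rw [comp_equiv_symm_dotProduct]
    exact hs i hi _ hy

lemma xc_eq_zero_of_isEmpty {ι' : Type*} [Fintype ι'] [IsEmpty ι'] {P : Set (ι' → ℝ)}
    (hP : P.Nonempty) : xc P = 0 := by
  refine Nat.eq_zero_of_le_zero (xc_le_card_of_polyhedron (A := isEmptyElim) (b := isEmptyElim)
    (∅ : Finset Empty) (fun i => isEmptyElim i) ⟨{0}, Set.finite_singleton 0, ?_⟩ LinearMap.id ?_)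
  · ext x
    simp [polyhedron, Subsingleton.elim x 0]
  · simp only [polyhedron, IsEmpty.forall_iff, Set.ofPred_true, Set.image_univ, hP.eq_univ]
    exact Set.eq_univ_of_forall fun x => ⟨x, rfl⟩

end Polyhedron

section Centers

variable {V X : Type*} [Fintype V] [DecidableEq X]

def edgesAt (p q : V → X) (w : X) : Finset V := univ.filter fun v => p v = w ∨ q v = w

def centers (p q : V → X) : Finset X :=
  (univ.image p ∪ univ.image q).filter (fun w => 2 ≤ #(edgesAt p q w)) ∪
    (univ.filter fun v => #(edgesAt p q (p v)) ≤ 1 ∧ #(edgesAt p q (q v)) ≤ 1).image p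

variable {p q : V → X}

lemma mem_edgesAt {w : X} {v : V} : v ∈ edgesAt p q w ↔ p v = w ∨ q v = w := by
  simp [edgesAt]

lemma card_centers_le : #(centers p q) ≤ Fintype.card V := by
  classical
  set high := (univ.image p ∪ univ.image q).filter (fun w => 2 ≤ #(edgesAt p q w))
  set isolated := univ.filter fun v => #(edgesAt p q (p v)) ≤ 1 ∧ #(edgesAt p q (q v)) ≤ 1
  have hhigh : #high * 2 ≤ #isolatedᶜ * 2 := by
    refine card_mul_le_card_mul (fun w v => v ∈ edgesAt p q w) (fun w hw => ?_) (fun v _ => ?_)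
    · refine (mem_filter.1 hw).2.trans (card_le_card fun v hv => ?_)
      refine (mem_bipartiteAbove _).2 ⟨mem_compl.2 fun hiso => ?_, hv⟩
      have := (mem_filter.1 hw).2
      rcases mem_edgesAt.1 hv with rfl | rfl <;>
        simp only [isolated, mem_filter, mem_univ, true_and] at hiso <;> omega
    · refine (card_le_card (t := {p v, q v}) fun w hw => ?_).trans card_le_two
      rcases mem_edgesAt.1 ((mem_bipartiteBelow _).1 hw).2 with rfl | rfl <;> simp
  calc #(centers p q) ≤ #high + #(isolated.image p) := card_union_le _ _
    _ ≤ #isolatedᶜ + #isolated := add_le_add (by omega) card_image_le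
    _ = Fintype.card V := card_compl_add_card isolated

lemma mem_centers_of_two_le_card {w : X} {v : V} (hv : v ∈ edgesAt p q w)
    (hw : 2 ≤ #(edgesAt p q w)) : w ∈ centers p q := by
  refine mem_union_left _ (mem_filter.2 ⟨?_, hw⟩)
  rcases mem_edgesAt.1 hv with rfl | rfl <;> simp

lemma exists_mem_centers_mem_edgesAt (v : V) : ∃ c ∈ centers p q, v ∈ edgesAt p q c := by
  have hp : v ∈ edgesAt p q (p v) := mem_edgesAt.2 (Or.inl rfl)
  have hq : v ∈ edgesAt p q (q v) := mem_edgesAt.2 (Or.inr rfl)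
  by_cases hp2 : 2 ≤ #(edgesAt p q (p v))
  · exact ⟨p v, mem_centers_of_two_le_card hp hp2, hp⟩
  by_cases hq2 : 2 ≤ #(edgesAt p q (q v))
  · exact ⟨q v, mem_centers_of_two_le_card hq hq2, hq⟩
  exact ⟨p v, mem_union_right _ (mem_image_of_mem p (mem_filter.2 ⟨mem_univ v, by omega⟩)), hp⟩

lemma exists_mem_centers_edgesAt_subset {w : X} (hw : (edgesAt p q w).Nonempty) :
    ∃ c ∈ centers p q, edgesAt p q w ⊆ edgesAt p q c := by
  obtain ⟨v, hv⟩ := hw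
  by_cases h2 : 2 ≤ #(edgesAt p q w)
  · exact ⟨w, mem_centers_of_two_le_card hv h2, subset_rfl⟩
  obtain ⟨c, hc, hvc⟩ := exists_mem_centers_mem_edgesAt (p := p) (q := q) v
  refine ⟨c, hc, fun u hu => ?_⟩
  rwa [card_le_one.1 (by omega) u hu v hv]

end Centers

section StarRows

variable {V X : Type*} [Fintype V] [DecidableEq X]

def starBounds (p q : V → X) : V ⊕ centers p q → ℝ := Sum.elim 0 1

variable [DecidableEq V]

def starRows (p q : V → X) : V ⊕ centers p q → V → ℝ :=
  Sum.elim (fun v => -Pi.single v 1) fun c => ∑ v ∈ edgesAt p q c, Pi.single v 1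

variable {p q : V → X}

lemma mem_polyhedron_starRows {x : V → ℝ} :
    x ∈ polyhedron (starRows p q) (starBounds p q) ↔
      (∀ v, 0 ≤ x v) ∧ ∀ c ∈ centers p q, ∑ v ∈ edgesAt p q c, x v ≤ 1 := by
  simp [polyhedron, starRows, starBounds, sum_dotProduct]

lemma sum_edgesAt_le_one {x : V → ℝ} (hx : x ∈ polyhedron (starRows p q) (starBounds p q))
    (w : X) : ∑ v ∈ edgesAt p q w, x v ≤ 1 := by
  rw [mem_polyhedron_starRows] at hx
  rcases (edgesAt p q w).eq_empty_or_nonempty with hw | hw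
  · simp [hw]
  obtain ⟨c, hc, hwc⟩ := exists_mem_centers_edgesAt_subset hw
  exact (sum_le_sum_of_subset_of_nonneg hwc fun v _ _ => hx.1 v).trans (hx.2 c hc)

end StarRows

section CubeUnion

variable {V C : Type*}

def cubeUnionBounds : ((V ⊕ C) ⊕ V) ⊕ Bool → ℝ := Sum.elim 0 fun t => if t then 1 else -1

variable [DecidableEq C]

def cubeUnionVertices (D : C → Finset V) : Set (V ⊕ C → ℝ) :=
  {x | ∃ c, ∃ S : Set V, S ⊆ D c ∧ x = Sum.elim (S.indicator 1) (Pi.single c 1)}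

lemma image_inl_cubeUnionVertices {D : C → Finset V} :
    LinearMap.funLeft ℝ ℝ Sum.inl '' cubeUnionVertices D =
      {x | ∃ S : Set V, (∃ c, S ⊆ D c) ∧ x = S.indicator 1} := by
  ext x
  constructor
  · rintro ⟨_, ⟨c, S, hS, rfl⟩, rfl⟩
    exact ⟨S, ⟨c, hS⟩, rfl⟩
  · rintro ⟨S, ⟨c, hS⟩, rfl⟩
    exact ⟨_, ⟨c, S, hS, rfl⟩, rfl⟩

lemma finite_cubeUnionVertices [Finite V] [Finite C] {D : C → Finset V} :
    (cubeUnionVertices D).Finite := by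
  refine (Set.finite_range fun cS : C × Set V =>
    Sum.elim (cS.2.indicator 1) (Pi.single cS.1 (1 : ℝ))).subset ?_
  rintro _ ⟨c, S, -, rfl⟩
  exact ⟨(c, S), rfl⟩

variable [Fintype C] [DecidableEq V]

def cubeUnionRows (D : C → Finset V) : ((V ⊕ C) ⊕ V) ⊕ Bool → V ⊕ C → ℝ :=
  Sum.elim (Sum.elim (fun j => -Pi.single j 1)
      fun v => Pi.single (.inl v) 1 - ∑ c with v ∈ D c, Pi.single (.inr c) 1)
    fun t => (if t then 1 else -1 : ℝ) • ∑ c, Pi.single (.inr c) 1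

variable [Fintype V] {D : C → Finset V}

lemma mem_polyhedron_cubeUnionRows {x : V ⊕ C → ℝ} :
    x ∈ polyhedron (cubeUnionRows D) cubeUnionBounds ↔ (∀ j, 0 ≤ x j) ∧
      (∀ v, x (.inl v) ≤ ∑ c with v ∈ D c, x (.inr c)) ∧ ∑ c, x (.inr c) = 1 := by
  simp [polyhedron, cubeUnionRows, cubeUnionBounds, sum_dotProduct, sub_dotProduct,
    ge_antisymm_iff (a := ∑ c, x (.inr c)), and_assoc]

lemma sumElim_mem_convexHull_cubeUnionVertices (c : C) {u : V → ℝ}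
    (hu : ∀ v, u v ∈ Set.Icc 0 1) (hD : ∀ v ∉ D c, u v = 0) :
    Sum.elim u (Pi.single c 1) ∈ convexHull ℝ (cubeUnionVertices D) := by
  let t : V ⊕ C → Set ℝ :=
    Sum.elim (fun v => if v ∈ D c then {0, 1} else {0}) fun c' => {(Pi.single c 1 : C → ℝ) c'}
  refine convexHull_mono (s := Set.univ.pi t) ?_ (mem_convexHull_pi fun j _ => ?_)
  · intro x hx
    have hx_inl : ∀ v, x (.inl v) ∈ t (.inl v) := fun v => hx (.inl v) (Set.mem_univ _)
    refine ⟨c, {v | x (.inl v) = 1}, fun v hv => ?_, funext fun j => ?_⟩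
    · by_contra hvD
      rw [Finset.mem_coe] at hvD
      simpa [t, hvD, show x (.inl v) = 1 from hv] using hx_inl v
    · rcases j with v | c'
      · have h := hx_inl v
        by_cases hv : v ∈ D c
        · simp only [t, hv, if_true, Sum.elim_inl, Set.mem_insert_iff,
            Set.mem_singleton_iff] at h
          rcases h with h | h <;> simp [h]
        · simp only [t, hv, if_false, Sum.elim_inl, Set.mem_singleton_iff] at h
          simp [h]
      · simpa [t] using hx (.inr c') (Set.mem_univ _)
  · rcases j with v | c'
    · by_cases hv : v ∈ D c
      · simpa [t, hv, convexHull_pair, segment_eq_Icc] using hu v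
      · simp [t, hv, hD v hv]
    · simp [t]

lemma polyhedron_cubeUnionRows_subset :
    polyhedron (cubeUnionRows D) cubeUnionBounds ⊆ convexHull ℝ (cubeUnionVertices D) := by
  intro x hx
  obtain ⟨h0, hle, hsum⟩ := mem_polyhedron_cubeUnionRows.1 hx
  -- `x = ∑ c, λ c • (u c, e c)`; where the denominator vanishes, so does `x (.inl v)`, and the
  -- junk value `_ / 0 = 0` keeps the identity.
  let u : C → V → ℝ := fun c v =>
    if v ∈ D c then x (.inl v) / ∑ c' with v ∈ D c', x (.inr c') else 0
  have hx_eq : x = ∑ c, x (.inr c) • Sum.elim (u c) (Pi.single c 1) := by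
    funext j
    rcases j with v | c
    · simp only [Finset.sum_apply, Pi.smul_apply, Sum.elim_inl, smul_eq_mul, u, mul_ite,
        mul_zero, ← sum_filter, ← sum_mul]
      rcases eq_or_ne (∑ c' with v ∈ D c', x (.inr c')) 0 with h | h
      · simp [h, le_antisymm (h ▸ hle v) (h0 _)]
      · field_simp
    · simp [Finset.sum_apply, Pi.single_apply]
  rw [hx_eq]
  refine (convex_convexHull ℝ _).sum_mem (fun c _ => h0 _) hsum fun c _ =>
    sumElim_mem_convexHull_cubeUnionVertices c (fun v => ?_) fun v hv => by simp [u, hv]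
  by_cases hv : v ∈ D c
  · simp only [u, hv, if_true]
    exact ⟨div_nonneg (h0 _) (sum_nonneg fun _ _ => h0 _), div_le_one_of_le₀ (hle v)
      (sum_nonneg fun _ _ => h0 _)⟩
  · simp [u, hv]

lemma cubeUnionVertices_subset_polyhedron :
    cubeUnionVertices D ⊆ polyhedron (cubeUnionRows D) cubeUnionBounds := by
  rintro _ ⟨c, S, hS, rfl⟩
  refine mem_polyhedron_cubeUnionRows.2 ⟨?_, fun v => ?_, by simp⟩
  · rintro (v | c')
    · exact Set.indicator_nonneg (fun _ _ => zero_le_one) v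
    · simp only [Sum.elim_inr, Pi.single_apply]
      positivity
  · by_cases hv : v ∈ S
    · simp [hv, Finset.mem_coe.1 (hS hv), Pi.single_apply]
    · simp only [Sum.elim_inl, Set.indicator_of_notMem hv, Sum.elim_inr]
      exact sum_nonneg fun _ _ => by simp only [Pi.single_apply]; positivity

theorem polyhedron_cubeUnionRows_eq_convexHull :
    polyhedron (cubeUnionRows D) cubeUnionBounds = convexHull ℝ (cubeUnionVertices D) :=
  polyhedron_cubeUnionRows_subset.antisymm
    (convexHull_min cubeUnionVertices_subset_polyhedron convex_polyhedron)

theorem xc_convexHull_indicator_le :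
    xc (convexHull ℝ {x : V → ℝ | ∃ S : Set V, (∃ c, S ⊆ D c) ∧ x = S.indicator 1}) ≤
      2 * Fintype.card V + Fintype.card C := by
  have hQ := polyhedron_cubeUnionRows_eq_convexHull (D := D)
  calc _ ≤ #(univ.map .inl : Finset (((V ⊕ C) ⊕ V) ⊕ Bool)) := by
        refine xc_le_card_of_polyhedron _ ?_ ⟨_, finite_cubeUnionVertices, hQ⟩
          (LinearMap.funLeft ℝ ℝ Sum.inl) ?_
        · rintro (i | t) hi x hx
          · exact absurd (mem_map_of_mem _ (mem_univ i)) hi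
          · have hsum := (mem_polyhedron_cubeUnionRows.1 hx).2.2
            cases t <;> simp [cubeUnionRows, cubeUnionBounds, sum_dotProduct, hsum]
        · rw [hQ, LinearMap.image_convexHull, image_inl_cubeUnionVertices]
    _ = 2 * Fintype.card V + Fintype.card C := by
        simp only [card_map, card_univ, Fintype.card_sum]
        ring

end CubeUnion

theorem mem_convexHull_toBlocks₁₂_permMatrix {m n : Type*} [Fintype m] [Fintype n]
    [DecidableEq m] [DecidableEq n] {y : Matrix m n ℝ} (h0 : ∀ i j, 0 ≤ y i j)
    (hrow : ∀ i, ∑ j, y i j ≤ 1) (hcol : ∀ j, ∑ i, y i j ≤ 1) :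
    y ∈ convexHull ℝ (Set.range fun σ : Equiv.Perm (m ⊕ n) => (σ.permMatrix ℝ).toBlocks₁₂) := by
  let M : Matrix (m ⊕ n) (m ⊕ n) ℝ :=
    fromBlocks (diagonal fun i => 1 - ∑ j, y i j) y yᵀ (diagonal fun j => 1 - ∑ i, y i j)
  have hM : M ∈ doublyStochastic ℝ (m ⊕ n) := by
    refine mem_doublyStochastic_iff_sum.2 ⟨?_, ?_, ?_⟩
    · rintro (i | j) (i' | j') <;> simp only [M, fromBlocks_apply₁₁, fromBlocks_apply₁₂,
        fromBlocks_apply₂₁, fromBlocks_apply₂₂, diagonal_apply, transpose_apply]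
      · split_ifs <;> linarith [hrow i]
      · exact h0 i j'
      · exact h0 i' j
      · split_ifs <;> linarith [hcol j]
    · rintro (i | j) <;> simp [M, Fintype.sum_sum_type, diagonal_apply]
    · rintro (i | j) <;> simp [M, Fintype.sum_sum_type, diagonal_apply]
  rw [← SetLike.mem_coe, doublyStochastic_eq_convexHull_permMatrix] at hM
  have hlin : IsLinearMap ℝ (toBlocks₁₂ : Matrix (m ⊕ n) (m ⊕ n) ℝ → Matrix m n ℝ) :=
    ⟨fun _ _ => rfl, fun _ _ => rfl⟩
  have := hlin.image_convexHull _ ▸ Set.mem_image_of_mem toBlocks₁₂ hM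
  simp only [M, toBlocks_fromBlocks₁₂] at this
  change y ∈ convexHull ℝ (toBlocks₁₂ '' Set.range fun σ : Equiv.Perm (m ⊕ n) => σ.permMatrix ℝ)
    at this
  rwa [← Set.range_comp] at this

lemma isPolytope_stab {V : Type*} [Fintype V] (G : SimpleGraph V) : IsPolytope (stab G) := by
  refine ⟨_, (Set.finite_range fun S : Set V => (S.indicator 1 : V → ℝ)).subset ?_, rfl⟩
  rintro _ ⟨S, -, rfl⟩
  exact ⟨S, rfl⟩

lemma zero_mem_stab {V : Type*} [Fintype V] (G : SimpleGraph V) : 0 ∈ stab G :=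
  subset_convexHull ℝ _ ⟨∅, by simp, (Set.indicator_empty' 1).symm⟩

/-- `G` is the line graph of the bipartite graph with sides `L`, `R` whose edges are the pairs
`(a v, b v)`, `v : V`. -/
structure IsBipartiteLineGraph {V L R : Type*} (G : SimpleGraph V) (a : V → L) (b : V → R) :
    Prop where
  injective : Function.Injective fun v => (a v, b v)
  adj_iff : ∀ u v, G.Adj u v ↔ u ≠ v ∧ (a u = a v ∨ b u = b v)

namespace IsBipartiteLineGraph

variable {V L R : Type*} {a : V → L} {b : V → R} {G : SimpleGraph V}

lemma not_adj_of_perm (hG : IsBipartiteLineGraph G a b)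
    (σ : Equiv.Perm (Set.range a ⊕ Set.range b)) {u v : V}
    (hu : σ (.inl (Set.rangeFactorization a u)) = .inr (Set.rangeFactorization b u))
    (hv : σ (.inl (Set.rangeFactorization a v)) = .inr (Set.rangeFactorization b v)) :
    ¬ G.Adj u v := by
  intro huv
  obtain ⟨hne, h⟩ := (hG.adj_iff u v).1 huv
  refine hne (hG.injective ?_)
  rcases h with h | h
  · have h' : Set.rangeFactorization a u = Set.rangeFactorization a v := Subtype.ext h
    rw [h', hv, Sum.inr.injEq] at hu
    exact Prod.ext h (congrArg Subtype.val hu.symm)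
  · have h' : Set.rangeFactorization b u = Set.rangeFactorization b v := Subtype.ext h
    rw [h', ← hv] at hu
    exact Prod.ext (congrArg Subtype.val (Sum.inl_injective (σ.injective hu))) h

variable [Fintype V]

section

variable [DecidableEq L] [DecidableEq R]

@[simp]
lemma mem_edgesAt_inl {v : V} {l : L} :
    v ∈ edgesAt (Sum.inl ∘ a) (Sum.inr ∘ b) (.inl l) ↔ a v = l := by
  simp [mem_edgesAt]

@[simp]
lemma mem_edgesAt_inr {v : V} {r : R} :
    v ∈ edgesAt (Sum.inl ∘ a) (Sum.inr ∘ b) (.inr r) ↔ b v = r := by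
  simp [mem_edgesAt]

lemma adj_of_mem_edgesAt (hG : IsBipartiteLineGraph G a b) {w : L ⊕ R} {u v : V}
    (hu : u ∈ edgesAt (Sum.inl ∘ a) (Sum.inr ∘ b) w)
    (hv : v ∈ edgesAt (Sum.inl ∘ a) (Sum.inr ∘ b) w) (huv : u ≠ v) : G.Adj u v := by
  rw [hG.adj_iff]
  rcases w with l | r
  · simp only [mem_edgesAt_inl] at hu hv
    exact ⟨huv, .inl (hu.trans hv.symm)⟩
  · simp only [mem_edgesAt_inr] at hu hv
    exact ⟨huv, .inr (hu.trans hv.symm)⟩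

lemma exists_subset_edgesAt (hG : IsBipartiteLineGraph G a b) {S : Set V} (hS : G.IsClique S)
    {u₀ : V} (hu₀ : u₀ ∈ S) : ∃ w, S ⊆ edgesAt (Sum.inl ∘ a) (Sum.inr ∘ b) w := by
  have hadj : ∀ {u v}, u ∈ S → v ∈ S → u ≠ v → a u = a v ∨ b u = b v :=
    fun hu hv huv => ((hG.adj_iff _ _).1 (hS hu hv huv)).2
  have key : (∀ v ∈ S, a v = a u₀) ∨ ∀ v ∈ S, b v = b u₀ := by
    by_contra! ⟨⟨f, hf, hfa⟩, ⟨g, hg, hgb⟩⟩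
    have hfb : b f = b u₀ := (hadj hf hu₀ (by rintro rfl; exact hfa rfl)).resolve_left hfa
    have hga : a g = a u₀ := (hadj hg hu₀ (by rintro rfl; exact hgb rfl)).resolve_right hgb
    rcases hadj hf hg (by rintro rfl; exact hfa hga) with h | h
    · exact hfa (h.trans hga)
    · exact hgb (h.symm.trans hfb)
  rcases key with h | h
  · exact ⟨.inl (a u₀), fun v hv => by simp [h v hv]⟩
  · exact ⟨.inr (b u₀), fun v hv => by simp [h v hv]⟩

lemma mem_stab_of_sum_le_one (hG : IsBipartiteLineGraph G a b) {x : V → ℝ} (h0 : ∀ v, 0 ≤ x v)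
    (hl : ∀ l, ∑ v with a v = l, x v ≤ 1) (hr : ∀ r, ∑ v with b v = r, x v ≤ 1) :
    x ∈ stab G := by
  -- `y` is the weight matrix of `x` on `range a × range b`; a permutation `σ` of
  -- `range a ⊕ range b` contributes the matching `{v | σ (a v) = b v}`.
  let a' := Set.rangeFactorization a
  let b' := Set.rangeFactorization b
  let y : Matrix (Set.range a) (Set.range b) ℝ := fun l r => ∑ v with a' v = l ∧ b' v = r, x v
  have hy : y ∈ convexHull ℝ (Set.range fun σ : Equiv.Perm (Set.range a ⊕ Set.range b) =>
      (σ.permMatrix ℝ).toBlocks₁₂) := by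
    refine mem_convexHull_toBlocks₁₂_permMatrix (fun l r => sum_nonneg fun v _ => h0 v)
      (fun l => ?_) (fun r => ?_)
    · calc ∑ r, y l r = ∑ v with a v = l, x v := by
            simp only [y, ← filter_filter, sum_fiberwise]
            exact sum_congr (filter_congr fun v _ => Subtype.ext_iff) fun _ _ => rfl
        _ ≤ 1 := hl l
    · calc ∑ l, y l r = ∑ v with b v = r, x v := by
            simp only [y, ← filter_filter, filter_comm (fun v => a' v = _), sum_fiberwise]
            exact sum_congr (filter_congr fun v _ => Subtype.ext_iff) fun _ _ => rfl
        _ ≤ 1 := hr r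
  let Ψ : Matrix (Set.range a) (Set.range b) ℝ →ₗ[ℝ] V → ℝ :=
    LinearMap.pi fun v => LinearMap.proj (b' v) ∘ₗ LinearMap.proj (a' v)
  have hΨy : Ψ y = x := by
    funext v
    change ∑ u with a' u = a' v ∧ b' u = b' v, x u = x v
    refine sum_eq_single_of_mem v (by simp) fun u hu huv => absurd (hG.injective ?_) huv
    obtain ⟨-, hau, hbu⟩ := mem_filter.1 hu
    exact Prod.ext (congrArg Subtype.val hau) (congrArg Subtype.val hbu)
  have hΨσ : ∀ σ : Equiv.Perm (Set.range a ⊕ Set.range b), Ψ (σ.permMatrix ℝ).toBlocks₁₂ ∈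
      {x | ∃ S : Set V, (∀ u ∈ S, ∀ v ∈ S, ¬ G.Adj u v) ∧ x = S.indicator 1} := by
    intro σ
    refine ⟨{v | σ (.inl (a' v)) = .inr (b' v)}, fun u hu v hv => hG.not_adj_of_perm σ hu hv,
      funext fun v => ?_⟩
    change σ.permMatrix ℝ (.inl (a' v)) (.inr (b' v)) = _
    simp [Set.indicator_apply, PEquiv.toMatrix_apply, eq_comm]
  rw [← hΨy]
  refine convexHull_mono ?_ (Ψ.image_convexHull _ ▸ Set.mem_image_of_mem Ψ hy)
  rintro _ ⟨_, ⟨σ, rfl⟩, rfl⟩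
  exact hΨσ σ

lemma stab_eq_polyhedron [DecidableEq V] (hG : IsBipartiteLineGraph G a b) :
    stab G = polyhedron (starRows (Sum.inl ∘ a) (Sum.inr ∘ b)) (starBounds _ _) := by
  refine subset_antisymm (convexHull_min ?_ convex_polyhedron) fun x hx => ?_
  · rintro _ ⟨S, hS, rfl⟩
    refine mem_polyhedron_starRows.2 ⟨fun v => Set.indicator_nonneg (fun _ _ => zero_le_one) v,
      fun c _ => ?_⟩
    classical
    simp only [Set.indicator_apply, Pi.one_apply, sum_boole, Nat.cast_le_one]
    exact card_le_one.2 fun u hu v hv => by_contra fun huv => hS u (mem_filter.1 hu).2 v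
      (mem_filter.1 hv).2 (hG.adj_of_mem_edgesAt (mem_filter.1 hu).1 (mem_filter.1 hv).1 huv)
  · refine hG.mem_stab_of_sum_le_one (mem_polyhedron_starRows.1 hx).1 (fun l => ?_) (fun r => ?_)
    · simpa [edgesAt] using sum_edgesAt_le_one hx (.inl l)
    · simpa [edgesAt] using sum_edgesAt_le_one hx (.inr r)

lemma stab_compl_eq [Nonempty V] (hG : IsBipartiteLineGraph G a b) :
    stab Gᶜ = convexHull ℝ {x | ∃ S : Set V, (∃ c : centers (Sum.inl ∘ a) (Sum.inr ∘ b),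
      S ⊆ edgesAt (Sum.inl ∘ a) (Sum.inr ∘ b) c) ∧ x = S.indicator 1} := by
  simp only [stab, SimpleGraph.compl_adj, not_and, not_not]
  refine congrArg _ (Set.ext fun x => exists_congr fun S => and_congr_left fun _ => ?_)
  change G.IsClique S ↔ _
  constructor
  · intro hS
    rcases S.eq_empty_or_nonempty with rfl | ⟨u₀, hu₀⟩
    · obtain ⟨c, hc, -⟩ := exists_mem_centers_mem_edgesAt (p := Sum.inl ∘ a) (q := Sum.inr ∘ b)
        (Classical.arbitrary V)
      exact ⟨⟨c, hc⟩, Set.empty_subset _⟩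
    · obtain ⟨w, hw⟩ := hG.exists_subset_edgesAt hS hu₀
      obtain ⟨c, hc, hwc⟩ := exists_mem_centers_edgesAt_subset ⟨u₀, hw hu₀⟩
      exact ⟨⟨c, hc⟩, hw.trans (coe_subset.2 hwc)⟩
  · rintro ⟨c, hc⟩ u hu v hv huv
    exact hG.adj_of_mem_edgesAt (hc hu) (hc hv) huv

end

theorem xc_stab_le (hG : IsBipartiteLineGraph G a b) : xc (stab G) ≤ 2 * Fintype.card V := by
  classical
  have := card_centers_le (p := Sum.inl ∘ a) (q := Sum.inr ∘ b)
  calc xc (stab G) ≤ #(univ : Finset (V ⊕ centers (Sum.inl ∘ a) (Sum.inr ∘ b))) :=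
        xc_le_card_of_polyhedron univ (fun i hi => absurd (mem_univ i) hi)
          (hG.stab_eq_polyhedron ▸ isPolytope_stab G) LinearMap.id
          (by rw [LinearMap.id_coe, Set.image_id, hG.stab_eq_polyhedron])
    _ ≤ 2 * Fintype.card V := by
        rw [card_univ, Fintype.card_sum, Fintype.card_coe]
        omega

theorem xc_stab_compl_le (hG : IsBipartiteLineGraph G a b) :
    xc (stab Gᶜ) ≤ 3 * Fintype.card V := by
  classical
  rcases isEmpty_or_nonempty V with hV | hV
  · simp [xc_eq_zero_of_isEmpty ⟨0, zero_mem_stab Gᶜ⟩]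
  have := card_centers_le (p := Sum.inl ∘ a) (q := Sum.inr ∘ b)
  calc xc (stab Gᶜ) ≤ 2 * Fintype.card V + Fintype.card (centers (Sum.inl ∘ a) (Sum.inr ∘ b)) := by
        rw [hG.stab_compl_eq]
        exact xc_convexHull_indicator_le
    _ ≤ 3 * Fintype.card V := by
        rw [Fintype.card_coe]
        omega

end IsBipartiteLineGraph

lemma lineGraph_adj {W : Type*} {H : SimpleGraph W} {e f : H.edgeSet} :
    (lineGraph H).Adj e f ↔ e ≠ f ∧ ∃ w, w ∈ (e : Sym2 W) ∧ w ∈ (f : Sym2 W) := by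
  simp only [lineGraph, SimpleGraph.fromRel_adj, and_comm (a := _ ∈ (f : Sym2 W)), or_self]

lemma IsBipartite.exists_isBipartiteLineGraph {V W : Type*} {G : SimpleGraph V}
    {H : SimpleGraph W} (hH : IsBipartite H) (φ : G ≃g lineGraph H) :
    ∃ (s : Set W) (a : V → s) (b : V → ↥sᶜ), IsBipartiteLineGraph G a b := by
  obtain ⟨s, hs⟩ := hH
  have hends : ∀ e ∈ H.edgeSet, ∃ x ∈ s, ∃ y ∉ s, e = s(x, y) := by
    intro e he
    induction e using Sym2.ind with
    | _ x y =>
      by_cases hx : x ∈ s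
      · exact ⟨x, hx, y, (hs he).1 hx, rfl⟩
      · exact ⟨y, by have := hs he; tauto, x, hx, Sym2.eq_swap⟩
  choose a ha b hb hab using fun v => hends _ (φ v).2
  refine ⟨s, fun v => ⟨a v, ha v⟩, fun v => ⟨b v, hb v⟩, ⟨fun u v huv => ?_, fun u v => ?_⟩⟩
  · simp only [Prod.mk.injEq, Subtype.mk.injEq] at huv
    exact φ.injective (Subtype.ext (by rw [hab, hab, huv.1, huv.2]))
  · rw [← φ.map_adj_iff, lineGraph_adj, hab, hab, φ.injective.ne_iff]
    refine and_congr_right fun _ => ⟨?_, ?_⟩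
    · rintro ⟨w, hwu, hwv⟩
      rw [Sym2.mem_iff] at hwu hwv
      rcases hwu with rfl | rfl <;> rcases hwv with h | h
      · exact .inl (Subtype.ext h)
      · exact absurd (h ▸ ha u) (hb v)
      · exact absurd (h ▸ ha v) (hb u)
      · exact .inr (Subtype.ext h)
    · rintro (h | h)
      · exact ⟨a u, Sym2.mem_mk_left _ _, Sym2.mem_iff.2 (.inl (Subtype.ext_iff.1 h))⟩
      · exact ⟨b u, Sym2.mem_mk_right _ _, Sym2.mem_iff.2 (.inr (Subtype.ext_iff.1 h))⟩

/-- if `G = (V, E)` is the line graph of a bipartite graph, then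
`xc (STAB G) ≤ 2|V|` and `xc (STAB Ḡ) ≤ 3|V|` for the complement `Ḡ` of `G`. -/
theorem xc_stab_lineGraph_bipartite {V : Type*} {W : Type*} [Fintype V]
    (G : SimpleGraph V) (H : SimpleGraph W) (hH : IsBipartite H)
    (hiso : Nonempty (G ≃g lineGraph H)) :
    xc (stab G) ≤ 2 * Fintype.card V ∧ xc (stab Gᶜ) ≤ 3 * Fintype.card V := by
  obtain ⟨φ⟩ := hiso
  obtain ⟨s, a, b, hG⟩ := hH.exists_isBipartiteLineGraph φ
  exact ⟨hG.xc_stab_le, hG.xc_stab_compl_le⟩
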